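/- The weighted-average feature function is transitive: in a hierarchy where each internal node's weighted feature set is the size-weighted average of its children's weighted feature sets (with weights of absent features taken as 0, and node size equal to the number of leaves below it), the weighted average of a node's depth-n descendants' features (weighted by their sizes) equals the weighted average of its depth-m descendants' features, for all valid n, m. -/
import Mathlib


/-- A hierarchy: a finite rooted tree whose leaves carry feature weight
vectors (functions from a feature index set `ι` to reals). -/
inductive WHier (ι : Type) : Type
  | leaf (w : ι → ℝ) : WHier ι
  | node (children : List (WHier ι)) : WHier ι

namespace WHier

-- The size of a node: the number of leaf binaries below it.
mutual
  def size {ι : Type} : WHier ι → ℕ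
    | .leaf _ => 1
    | .node cs => sizeList cs
  def sizeList {ι : Type} : List (WHier ι) → ℕ
    | [] => 0
    | c :: cs => size c + sizeList cs
end

-- The weighted feature vector of a node: a leaf's own weights, or the
-- size-weighted average of the children's weights for an internal node.
mutual
  noncomputable def feat {ι : Type} : WHier ι → ι → ℝ
    | .leaf w => w
    | .node cs => fun f => wsumList cs f / (sizeList cs : ℝ)
  noncomputable def wsumList {ι : Type} : List (WHier ι) → ι → ℝ
    | [], _ => 0
    | c :: cs, f => (size c : ℝ) * feat c f + wsumList cs f
end

-- Descendants at depth `n`.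
mutual
  def desc {ι : Type} : WHier ι → ℕ → List (WHier ι)
    | t, 0 => [t]
    | .leaf _, _ + 1 => []
    | .node cs, n + 1 => descList cs n
  def descList {ι : Type} : List (WHier ι) → ℕ → List (WHier ι)
    | [], _ => []
    | c :: cs, n => desc c n ++ descList cs n
end

-- Depth `n` is valid for the tree (every path from the root reaches depth `n`).
mutual
  def complete {ι : Type} : WHier ι → ℕ → Prop
    | _, 0 => True
    | .leaf _, _ + 1 => False
    | .node cs, n + 1 => cs ≠ [] ∧ completeList cs n
  def completeList {ι : Type} : List (WHier ι) → ℕ → Prop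
    | [], _ => True
    | c :: cs, n => complete c n ∧ completeList cs n
end

/-- The size-weighted average of the features of a list of nodes. -/
noncomputable def wavg {ι : Type} (l : List (WHier ι)) : ι → ℝ :=
  fun f => wsumList l f / (sizeList l : ℝ)

theorem sizeList_append {ι : Type} (a b : List (WHier ι)) :
    sizeList (a ++ b) = sizeList a + sizeList b := by
  induction a with
  | nil => simp [sizeList]
  | cons c cs ih => simp [sizeList, ih]; ring

theorem wsumList_append {ι : Type} (a b : List (WHier ι)) (f : ι) :
    wsumList (a ++ b) f = wsumList a f + wsumList b f := by
  induction a with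
  | nil => simp [wsumList]
  | cons c cs ih => simp [wsumList, ih]; ring

theorem wsum_zero_of_size_zero {ι : Type} (cs : List (WHier ι))
    (h : sizeList cs = 0) (f : ι) : wsumList cs f = 0 := by
  induction cs with
  | nil => simp [wsumList]
  | cons c cs ih =>
    simp [sizeList] at h
    simp [wsumList, h.1, ih h.2]

theorem desc_spec {ι : Type} (n : ℕ) : ∀ (t : WHier ι), complete t n →
    sizeList (desc t n) = size t ∧
      ∀ f, wsumList (desc t n) f = (size t : ℝ) * feat t f := by
  induction n with
  | zero =>
    intro t _
    simp [desc, sizeList, wsumList]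
  | succ n ih =>
    intro t ht
    match t with
    | .leaf w => exact absurd ht (by simp [complete])
    | .node cs =>
      have hcs : completeList cs n := ht.2
      have key : sizeList (descList cs n) = sizeList cs ∧
          ∀ f, wsumList (descList cs n) f = wsumList cs f := by
        clear ht
        induction cs with
        | nil => simp [descList]
        | cons c cs ihcs =>
          obtain ⟨h1, h2⟩ := hcs
          obtain ⟨s1, w1⟩ := ih c h1
          obtain ⟨s2, w2⟩ := ihcs h2
          constructor
          · simp [descList, sizeList_append, s1, s2, sizeList]
          · intro f
            simp [descList, wsumList_append, w1 f, w2 f, wsumList]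
      refine ⟨by simpa [desc, size] using key.1, fun f => ?_⟩
      rw [show desc (WHier.node cs) (n+1) = descList cs n from rfl, key.2 f]
      show _ = (size (WHier.node cs) : ℝ) * (wsumList cs f / (sizeList cs : ℝ))
      rw [show size (WHier.node cs) = sizeList cs from rfl]
      by_cases h0 : sizeList cs = 0
      · simp [h0, wsum_zero_of_size_zero cs h0 f]
      · field_simp

end WHier

open WHier in
/-- The weighted-average feature function is transitive: in a
hierarchy where each internal node's weighted feature set is the size-weighted
average of its children's weighted feature sets, the size-weighted average of
a node's depth-`n` descendants' features equals the size-weighted average of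
its depth-`m` descendants' features, for all valid depths `n`, `m`. -/
theorem weighted_average_transitive_feature_function {ι : Type}
    (t : WHier ι) (n m : ℕ) (hn : complete t n) (hm : complete t m) :
    wavg (desc t n) = wavg (desc t m) := by
  obtain ⟨sn, wn⟩ := desc_spec n t hn
  obtain ⟨sm, wm⟩ := desc_spec m t hm
  funext f
  simp [wavg, sn, sm, wn f, wm f]
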